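/- Let A be a deterministic VASS with n states recognising a language L ⊆ {a,b,c}* under coverability acceptance, and suppose a^{n+1} b^j ∈ L for all j ≤ n+1. Then there exist i < j ≤ n+1 such that the configurations reached after a^{n+1} b^i and a^{n+1} b^j share the same state; moreover if the counter difference is componentwise nonnegative, then a^{n+1} b^{i+(j-i)·t} is accepted for all t ≥ 0, and otherwise the run dies on a^{n+1} b^{i+(j-i)·t} for some t. -/

import Mathlib

open scoped Classical

/-- A `k`-dimensional vector addition system with states over alphabet `A`.
States are `Fin n`; transitions are labelled by a letter and an effect in `ℤ^k`. -/
structure VASS (k : ℕ) (A : Type) where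
  n : ℕ
  trans : Set (Fin n × A × (Fin k → ℤ) × Fin n)
  init : Fin n
  acc : Set (Fin n)

namespace VASS

variable {k : ℕ} {A : Type}

/-- A configuration: a state together with counters in `ℕ^k`. -/
abbrev Conf (V : VASS k A) := Fin V.n × (Fin k → ℕ)

/-- `Run V c w c'`: there is a valid run of `V` from configuration `c` to `c'`
reading the word `w`, with counters staying nonnegative throughout. -/
inductive Run (V : VASS k A) : V.Conf → List A → V.Conf → Prop
  | nil (c : V.Conf) : Run V c [] c
  | cons {q : Fin V.n} {v : Fin k → ℕ} {a : A} {d : Fin k → ℤ} {q' : Fin V.n}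
      {w : List A} {c' : V.Conf} :
      (q, a, d, q') ∈ V.trans →
      (∀ i, 0 ≤ (v i : ℤ) + d i) →
      Run V (q', fun i => ((v i : ℤ) + d i).toNat) w c' →
      Run V (q, v) (a :: w) c'

/-- The initial configuration: initial state with all counters zero. -/
def initConf (V : VASS k A) : V.Conf := (V.init, fun _ => 0)

/-- Coverability acceptance: some run ends in an accepting state. -/
def LangCover (V : VASS k A) : Set (List A) :=
  {w | ∃ c, V.Run V.initConf w c ∧ c.1 ∈ V.acc}

/-- Reachability acceptance: some run ends in an accepting state with all counters zero. -/
def LangReach (V : VASS k A) : Set (List A) :=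
  {w | ∃ c, V.Run V.initConf w c ∧ c.1 ∈ V.acc ∧ c.2 = fun _ => 0}

/-- Deterministic: at most one outgoing transition per state and letter. -/
def Det (V : VASS k A) : Prop :=
  ∀ q a d₁ q₁ d₂ q₂, (q, a, d₁, q₁) ∈ V.trans → (q, a, d₂, q₂) ∈ V.trans →
    d₁ = d₂ ∧ q₁ = q₂

/-- A resolver: given the history (the word read so far) and the next letter,
choose the effect and target state of the transition to take. -/
def Resolver (V : VASS k A) := List A → A → (Fin k → ℤ) × Fin V.n

/-- One step of the run built by a resolver (carrying the prefix read so far). -/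
noncomputable def resStep (V : VASS k A) (r : V.Resolver) :
    (List A × Option V.Conf) → A → (List A × Option V.Conf) :=
  fun p a =>
    (p.1 ++ [a],
      p.2.bind fun c =>
        let t := r p.1 a
        if (c.1, a, t.1, t.2) ∈ V.trans ∧ ∀ i, 0 ≤ ((c.2 i : ℤ) + t.1 i) then
          some (t.2, fun i => ((c.2 i : ℤ) + t.1 i).toNat)
        else none)

/-- The configuration reached by following the resolver on `w` (if the run survives). -/
noncomputable def resRun (V : VASS k A) (r : V.Resolver) (w : List A) : Option V.Conf :=
  (w.foldl (V.resStep r) ([], some V.initConf)).2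

/-- History-determinism for coverability acceptance:
some resolver's run accepts every word of the language. -/
def HDCover (V : VASS k A) : Prop :=
  ∃ r : V.Resolver, ∀ w ∈ V.LangCover,
    ∃ c, V.resRun r w = some c ∧ c.1 ∈ V.acc

/-- History-determinism for reachability acceptance. -/
def HDReach (V : VASS k A) : Prop :=
  ∃ r : V.Resolver, ∀ w ∈ V.LangReach,
    ∃ c, V.resRun r w = some c ∧ c.1 ∈ V.acc ∧ c.2 = fun _ => 0

/-- Coverability language of a VASS with ε-transitions (letter `none` is silent):
the input word is the sequence of actual letters read. -/
def LangCoverE (V : VASS k (Option A)) : Set (List A) :=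
  {w | ∃ u c, V.Run V.initConf u c ∧ u.reduceOption = w ∧ c.1 ∈ V.acc}

/-- Reachability language of a VASS with ε-transitions. -/
def LangReachE (V : VASS k (Option A)) : Set (List A) :=
  {w | ∃ u c, V.Run V.initConf u c ∧ u.reduceOption = w ∧ c.1 ∈ V.acc ∧ c.2 = fun _ => 0}

/-- History-determinism with ε-transitions, coverability: a resolver together with a
(prefix-monotone) scheduling of silent moves accepts every word of the language. -/
def HDCoverE (V : VASS k (Option A)) : Prop :=
  ∃ (r : V.Resolver) (f : List A → List (Option A)),
    (∀ u w, u <+: w → f u <+: f w) ∧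
    ∀ w ∈ V.LangCoverE, (f w).reduceOption = w ∧
      ∃ c, V.resRun r (f w) = some c ∧ c.1 ∈ V.acc

/-- History-determinism with ε-transitions, reachability. -/
def HDReachE (V : VASS k (Option A)) : Prop :=
  ∃ (r : V.Resolver) (f : List A → List (Option A)),
    (∀ u w, u <+: w → f u <+: f w) ∧
    ∀ w ∈ V.LangReachE, (f w).reduceOption = w ∧
      ∃ c, V.resRun r (f w) = some c ∧ c.1 ∈ V.acc ∧ c.2 = fun _ => 0

end VASS

inductive ABC | a | b | c
deriving DecidableEq

open List

namespace VASS

variable {k : ℕ} {A : Type} {V : VASS k A}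

/-- Splitting a run on an appended word. -/
lemma run_append_iff {c₁ c₃ : V.Conf} {w₁ w₂ : List A} :
    V.Run c₁ (w₁ ++ w₂) c₃ ↔ ∃ c₂, V.Run c₁ w₁ c₂ ∧ V.Run c₂ w₂ c₃ := by
  constructor
  · induction w₁ generalizing c₁ with
    | nil => intro h; exact ⟨c₁, Run.nil _, h⟩
    | cons a w₁ ih =>
      intro h
      obtain ⟨q, v⟩ := c₁
      cases h with
      | cons ht hnn hrest =>
        obtain ⟨c₂, h₁, h₂⟩ := ih hrest
        exact ⟨c₂, Run.cons ht hnn h₁, h₂⟩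
  · rintro ⟨c₂, h₁, h₂⟩
    induction h₁ with
    | nil => exact h₂
    | cons ht hnn _ ih => exact Run.cons ht hnn (ih h₂)

/-- Determinism: two runs from the same state on the same word end in the same
state with the same counter displacement. -/
lemma run_det_displacement (hdet : V.Det) :
    ∀ {c : V.Conf} {w : List A} {c₁ : V.Conf}, V.Run c w c₁ →
      ∀ {v₂ : Fin k → ℕ} {c₂ : V.Conf}, V.Run (c.1, v₂) w c₂ →
        c₁.1 = c₂.1 ∧ ∀ x, (c₁.2 x : ℤ) - c.2 x = (c₂.2 x : ℤ) - v₂ x := by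
  intro c w c₁ h
  induction h with
  | nil c =>
    intro v₂ c₂ h₂
    cases h₂
    exact ⟨rfl, fun x => by simp⟩
  | cons ht hnn _ ih =>
    intro v₂ c₂ h₂
    cases h₂ with
    | cons ht₂ hnn₂ hrest₂ =>
      obtain ⟨hd, hq⟩ := hdet _ _ _ _ _ _ ht ht₂
      subst hd; subst hq
      obtain ⟨h1, h2⟩ := ih hrest₂
      refine ⟨h1, fun x => ?_⟩
      have := h2 x
      have := hnn x
      have := hnn₂ x
      simp only at *
      omega

/-- Determinism: runs are unique. -/
lemma run_unique (hdet : V.Det) {c c₁ c₂ : V.Conf} {w : List A}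
    (h₁ : V.Run c w c₁) (h₂ : V.Run c w c₂) : c₁ = c₂ := by
  obtain ⟨q, v⟩ := c
  obtain ⟨hq, hv⟩ := run_det_displacement hdet h₁ h₂
  have : c₁.2 = c₂.2 := by
    funext x
    have := hv x
    simp only at this
    omega
  exact Prod.ext hq this

/-- Monotonicity: adding `e` to the counters preserves runs. -/
lemma run_mono (e : Fin k → ℕ) :
    ∀ {c c' : V.Conf} {w : List A}, V.Run c w c' →
      V.Run (c.1, fun x => c.2 x + e x) w (c'.1, fun x => c'.2 x + e x) := by
  intro c c' w h
  induction h with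
  | nil c => exact Run.nil _
  | @cons q v a d q' w c' ht hnn hrest ih =>
    refine Run.cons ht (fun i => by have := hnn i; push_cast; omega) ?_
    convert ih using 2
    funext i
    have := hnn i
    push_cast
    omega

/-- Iterating a loop that increases counters by `e`. -/
lemma run_pump {q : Fin V.n} {v : Fin k → ℕ} {b : A} {m : ℕ} {e : Fin k → ℕ}
    (h : V.Run (q, v) (replicate m b) (q, fun x => v x + e x)) :
    ∀ t, V.Run (q, v) (replicate (m * t) b) (q, fun x => v x + t * e x) := by
  intro t
  induction t with
  | zero =>
    have h0 : (fun x => v x + 0 * e x) = v := by funext x; omega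
    rw [h0, Nat.mul_zero]
    exact Run.nil _
  | succ t ih =>
    have hw : replicate (m * (t + 1)) b = replicate (m * t) b ++ replicate m b := by
      rw [← List.replicate_add]; ring_nf
    rw [hw]
    refine run_append_iff.2 ⟨(q, fun x => v x + t * e x), ih, ?_⟩
    have h2 := run_mono (V := V) (fun x => t * e x) h
    have hfun : (fun x => v x + (t + 1) * e x) = fun x => (v x + e x) + t * e x := by
      funext x; ring
    rw [hfun]
    exact h2

end VASS

/-- The pumping dichotomy for deterministic VASS with coverability acceptance:
if `a^{n+1} b^j ∈ L` for all `j ≤ n+1` (where `n` is the number of states),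
then two of the configurations reached after `a^{n+1} b^i`, `i ≤ n+1`, share a
state; if the counter difference is componentwise nonnegative the pumped words
`a^{n+1} b^{i + (j-i)t}` are all accepted, and otherwise the run dies on one of
them. -/
theorem stmt16 (k : ℕ) (V : VASS k ABC) (hdet : V.Det)
    (hL : ∀ j ≤ V.n + 1,
      (replicate (V.n + 1) ABC.a ++ replicate j ABC.b) ∈ V.LangCover) :
    ∃ i j, i < j ∧ j ≤ V.n + 1 ∧
      ∃ (q : Fin V.n) (v v' : Fin k → ℕ),
        V.Run V.initConf (replicate (V.n + 1) ABC.a ++ replicate i ABC.b) (q, v) ∧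
        V.Run V.initConf (replicate (V.n + 1) ABC.a ++ replicate j ABC.b) (q, v') ∧
        ((∀ x, v x ≤ v' x) → ∀ t : ℕ,
          (replicate (V.n + 1) ABC.a ++ replicate (i + (j - i) * t) ABC.b) ∈ V.LangCover) ∧
        (¬ (∀ x, v x ≤ v' x) → ∃ t : ℕ,
          ¬ ∃ c, V.Run V.initConf
            (replicate (V.n + 1) ABC.a ++ replicate (i + (j - i) * t) ABC.b) c) := by
  classical
  have hg : ∀ i : Fin (V.n + 2), ∃ c : V.Conf,
      V.Run V.initConf (replicate (V.n + 1) ABC.a ++ replicate (i : ℕ) ABC.b) c ∧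
        c.1 ∈ V.acc := by
    intro i
    exact hL i (by omega)
  choose g hg1 hg2 using hg
  have hcard : Fintype.card (Fin V.n) < Fintype.card (Fin (V.n + 2)) := by
    simp
  obtain ⟨i₀, j₀, hne, heq⟩ := Fintype.exists_ne_map_eq_of_card_lt (fun i => (g i).1) hcard
  obtain ⟨i, j, hij, hstate⟩ : ∃ i j : Fin (V.n + 2), (i : ℕ) < (j : ℕ) ∧ (g i).1 = (g j).1 := by
    rcases lt_or_gt_of_ne (Fin.val_ne_of_ne hne) with h | h
    exacts [⟨i₀, j₀, h, heq⟩, ⟨j₀, i₀, h, heq.symm⟩]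
  have hjle : (j : ℕ) ≤ V.n + 1 := by omega
  -- the loop run from g i to g j on b^{j-i}
  have hsplit : replicate (j : ℕ) ABC.b
      = replicate (i : ℕ) ABC.b ++ replicate ((j : ℕ) - (i : ℕ)) ABC.b := by
    rw [← List.replicate_add]; congr 1; omega
  have hRj := hg1 j
  rw [hsplit, ← List.append_assoc] at hRj
  obtain ⟨mid, hpre, hloop⟩ := VASS.run_append_iff.1 hRj
  have hmid : mid = g i := VASS.run_unique hdet hpre (hg1 i)
  subst hmid
  refine ⟨i, j, hij, hjle, (g i).1, (g i).2, (g j).2, hg1 i, ?_, ?_, ?_⟩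
  · have := hg1 j
    rwa [show g j = ((g i).1, (g j).2) from Prod.ext hstate.symm rfl] at this
  · -- pumping case
    intro hle t
    set e : Fin k → ℕ := fun x => (g j).2 x - (g i).2 x with he
    have hE : g j = ((g i).1, fun x => (g i).2 x + e x) := by
      refine Prod.ext hstate.symm ?_
      funext x
      have := hle x
      simp [he]
      omega
    rw [hE] at hloop
    have hpump := VASS.run_pump (V := V) (q := (g i).1) (v := (g i).2)
      (b := ABC.b) (m := (j : ℕ) - (i : ℕ)) (e := e) hloop t
    have hword : replicate ((i : ℕ) + ((j : ℕ) - (i : ℕ)) * t) ABC.b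
        = replicate (i : ℕ) ABC.b ++ replicate (((j : ℕ) - (i : ℕ)) * t) ABC.b := by
      rw [← List.replicate_add]
    refine ⟨((g i).1, fun x => (g i).2 x + t * e x), ?_, hg2 i⟩
    rw [hword, ← List.append_assoc]
    exact VASS.run_append_iff.2 ⟨g i, hg1 i, hpump⟩
  · -- dying case
    intro hnle
    push_neg at hnle
    obtain ⟨x, hx⟩ := hnle
    set D : ℤ := ((g i).2 x : ℤ) - ((g j).2 x : ℤ) with hD
    have hD1 : 1 ≤ D := by simp [hD]; omega
    have claim : ∀ s : ℕ, ∀ c : V.Conf,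
        V.Run V.initConf
          (replicate (V.n + 1) ABC.a ++ replicate ((i : ℕ) + ((j : ℕ) - (i : ℕ)) * s) ABC.b) c →
        c.1 = (g i).1 ∧ (c.2 x : ℤ) = ((g i).2 x : ℤ) - s * D := by
      intro s
      induction s with
      | zero =>
        intro c hc
        rw [Nat.mul_zero, Nat.add_zero] at hc
        have := VASS.run_unique hdet hc (hg1 i)
        subst this
        simp
      | succ s ih =>
        intro c hc
        have hexps : (i : ℕ) + ((j : ℕ) - (i : ℕ)) * (s + 1)
            = ((i : ℕ) + ((j : ℕ) - (i : ℕ)) * s) + ((j : ℕ) - (i : ℕ)) := by ring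
        rw [hexps,
          show replicate ((i : ℕ) + ((j : ℕ) - (i : ℕ)) * s + ((j : ℕ) - (i : ℕ))) ABC.b
              = replicate ((i : ℕ) + ((j : ℕ) - (i : ℕ)) * s) ABC.b
                ++ replicate ((j : ℕ) - (i : ℕ)) ABC.b from List.replicate_add .. ,
          ← List.append_assoc] at hc
        obtain ⟨mid, hpre', hseg⟩ := VASS.run_append_iff.1 hc
        obtain ⟨hm1, hm2⟩ := ih mid hpre'
        have hseg' : V.Run ((g i).1, mid.2) (replicate ((j : ℕ) - (i : ℕ)) ABC.b) c := by
          rwa [show ((g i).1, mid.2) = mid from Prod.ext hm1.symm rfl]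
        obtain ⟨hq', hdisp⟩ := VASS.run_det_displacement hdet hloop hseg'
        refine ⟨hq'.symm.trans hstate.symm, ?_⟩
        have hy := hdisp x
        have hsD : ((s : ℤ) + 1) * D = s * D + D := by ring
        push_cast
        linarith [hm2, hy, hsD, hD]
    refine ⟨(g i).2 x + 1, ?_⟩
    rintro ⟨c, hc⟩
    obtain ⟨-, h2⟩ := claim ((g i).2 x + 1) c hc
    have hpos : (0 : ℤ) ≤ (c.2 x : ℤ) := by positivity
    have hmul : (((g i).2 x : ℤ) + 1) ≤ (((g i).2 x : ℤ) + 1) * D :=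
      le_mul_of_one_le_right (by positivity) hD1
    push_cast at h2
    linarith [h2, hpos, hmul]
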